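/- The function f(t, b, s) = √(2/π) t^{−3/2} (2s − b) exp(−(2s − b)²/(2t) + μ(b − μt/2)), defined for t > 0, s ≥ 0, b ≤ s, is a probability density: ∫_0^∞ ∫_{−∞}^s f(t, b, s) db ds = 1 for every fixed t > 0 and μ ∈ ℝ. -/

import Mathlib

/-! Integrate in `s` first; Fubini applies because the integrand is nonnegative on the
region `0 ≤ s, b ≤ s`. For fixed `b` the `s`-integrand `(2s - b) exp(-(2s - b)² / 2t)` has the
explicit primitive `-(t/2) exp(-(2s - b)² / 2t)`, and at the lower limit `s = max 0 b` we have
`2s - b = |b|`. Hence the `b`-marginal is exactly the density of `N(μt, t)`, which integrates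
to one. -/

open Set MeasureTheory

/-- Joint density of `(B_t^μ, S_t^μ)` for Brownian motion with drift `μ`. -/
noncomputable def jointDensity (μ t b s : ℝ) : ℝ :=
  Real.sqrt (2 / Real.pi) * t ^ (-(3:ℝ)/2) * (2 * s - b) *
    Real.exp (-(2 * s - b) ^ 2 / (2 * t) + μ * (b - μ * t / 2))

open Filter Real Topology ProbabilityTheory

section LinearGaussianTail

variable {v c : ℝ}

lemma hasDerivAt_exp_neg_sq_div (hv : v ≠ 0) (x : ℝ) :
    HasDerivAt (fun x ↦ -(v / 4) * exp (-(2 * x - c) ^ 2 / v))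
      ((2 * x - c) * exp (-(2 * x - c) ^ 2 / v)) x := by
  have hinner : HasDerivAt (fun x ↦ -(2 * x - c) ^ 2 / v) (-(4 * (2 * x - c)) / v) x :=
    ((((hasDerivAt_id x).const_mul 2).sub_const c).pow 2).neg.div_const v
      |>.congr_deriv (by simp only [id]; ring)
  exact (hinner.exp.const_mul (-(v / 4))).congr_deriv (by field_simp)

lemma tendsto_exp_neg_sq_div_atTop (hv : 0 < v) :
    Tendsto (fun x ↦ exp (-(2 * x - c) ^ 2 / v)) atTop (𝓝 0) := by
  have hlin : Tendsto (fun x : ℝ ↦ 2 * x - c) atTop atTop :=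
    tendsto_atTop_add_const_right _ _ (tendsto_id.const_mul_atTop two_pos)
  have hsq := ((tendsto_pow_atTop two_ne_zero).comp hlin).atTop_div_const hv
  refine tendsto_exp_atBot.comp (tendsto_neg_atTop_atBot.comp hsq) |>.congr fun x ↦ ?_
  simp [neg_div]

variable {a : ℝ}

lemma integrableOn_Ioi_mul_exp_neg_sq_div (hv : 0 < v) (hca : c ≤ 2 * a) :
    IntegrableOn (fun x ↦ (2 * x - c) * exp (-(2 * x - c) ^ 2 / v)) (Ioi a) := by
  refine integrableOn_Ioi_deriv_of_nonneg' (fun x _ ↦ hasDerivAt_exp_neg_sq_div hv.ne' x)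
    (fun x hx ↦ ?_) ((tendsto_exp_neg_sq_div_atTop hv).const_mul (-(v / 4)))
  have : 0 ≤ 2 * x - c := by linarith [mem_Ioi.1 hx]
  positivity

lemma integral_Ioi_mul_exp_neg_sq_div (hv : 0 < v) (hca : c ≤ 2 * a) :
    ∫ x in Ioi a, (2 * x - c) * exp (-(2 * x - c) ^ 2 / v) =
      v / 4 * exp (-(2 * a - c) ^ 2 / v) := by
  rw [integral_Ioi_of_hasDerivAt_of_tendsto' (fun x _ ↦ hasDerivAt_exp_neg_sq_div hv.ne' x)
    (integrableOn_Ioi_mul_exp_neg_sq_div hv hca)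
    ((tendsto_exp_neg_sq_div_atTop hv).const_mul (-(v / 4)))]
  ring

end LinearGaussianTail

section JointDensity

lemma jointDensity_eq (μ t b s : ℝ) :
    jointDensity μ t b s = √(2 / π) * t ^ (-(3 : ℝ) / 2) * exp (μ * (b - μ * t / 2)) *
      ((2 * s - b) * exp (-(2 * s - b) ^ 2 / (2 * t))) := by
  rw [jointDensity, exp_add]; ring

variable {μ t : ℝ}

lemma jointDensity_nonneg (ht : 0 ≤ t) {b s : ℝ} (hbs : b ≤ 2 * s) :
    0 ≤ jointDensity μ t b s := by
  have : 0 ≤ 2 * s - b := by linarith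
  rw [jointDensity]; positivity

lemma sqrt_two_div_pi_mul_rpow_mul_half (ht : 0 < t) :
    √(2 / π) * t ^ (-(3 : ℝ) / 2) * (t / 2) = (√(2 * π * t))⁻¹ := by
  rw [show -(3 : ℝ) / 2 = -1 - 1 / 2 by norm_num, rpow_sub ht, rpow_neg_one, ← sqrt_eq_rpow,
    sqrt_div' _ pi_pos.le, sqrt_mul' _ ht.le, sqrt_mul' _ pi_pos.le]
  have := sqrt_pos.2 ht
  have := sqrt_pos.2 pi_pos
  field_simp
  rw [sq_sqrt zero_le_two]

lemma integrableOn_Ici_jointDensity (ht : 0 < t) (b : ℝ) :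
    IntegrableOn (jointDensity μ t b) (Ici (max 0 b)) := by
  rw [integrableOn_Ici_iff_integrableOn_Ioi]
  refine IntegrableOn.congr_fun ?_ (fun s _ ↦ (jointDensity_eq μ t b s).symm) measurableSet_Ioi
  refine (integrableOn_Ioi_mul_exp_neg_sq_div (by positivity) ?_).const_mul _
  linarith [le_max_left 0 b, le_max_right 0 b]

lemma integral_Ici_jointDensity (ht : 0 < t) (b : ℝ) :
    ∫ s in Ici (max 0 b), jointDensity μ t b s = gaussianPDFReal (μ * t) t.toNNReal b := by
  have hb : 2 * max 0 b - b = |b| := by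
    rcases le_total b 0 with h | h <;> simp [h, abs_of_nonneg, abs_of_nonpos]; ring
  simp_rw [integral_Ici_eq_integral_Ioi, jointDensity_eq μ t b, integral_const_mul]
  rw [integral_Ioi_mul_exp_neg_sq_div (by positivity) (by rw [← sub_nonneg, hb]; positivity),
    hb, sq_abs, gaussianPDFReal, coe_toNNReal _ ht.le, ← sqrt_two_div_pi_mul_rpow_mul_half ht]
  have : exp (μ * (b - μ * t / 2)) * exp (-b ^ 2 / (2 * t)) =
      exp (-(b - μ * t) ^ 2 / (2 * t)) := by
    rw [← exp_add]; congr 1; field_simp; ring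
  rw [← this]; ring

lemma integral_Ici_zero_indicator_jointDensity (ht : 0 < t) (b : ℝ) :
    ∫ s in Ici 0, (Ici b).indicator (jointDensity μ t b) s =
      gaussianPDFReal (μ * t) t.toNNReal b := by
  rw [setIntegral_indicator measurableSet_Ici, Ici_inter_Ici]
  exact integral_Ici_jointDensity ht b

lemma integrable_indicator_jointDensity (ht : 0 < t) :
    Integrable (Function.uncurry fun s b ↦ (Ici b).indicator (jointDensity μ t b) s)
      ((volume.restrict (Ici 0)).prod volume) := by
  have hmeas :
      Measurable (Function.uncurry fun s b ↦ (Ici b).indicator (jointDensity μ t b) s) := by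
    have hcont : Continuous fun p : ℝ × ℝ ↦ jointDensity μ t p.2 p.1 := by
      unfold jointDensity; fun_prop
    convert hcont.measurable.indicator (measurableSet_le measurable_snd measurable_fst) using 1
    ext ⟨s, b⟩
    simp [indicator_apply]
  rw [integrable_prod_iff' hmeas.aestronglyMeasurable]
  refine ⟨ae_of_all _ fun b ↦ ?_, (integrable_gaussianPDFReal (μ * t) t.toNNReal).congr
    (ae_of_all _ fun b ↦ ?_)⟩
  · show IntegrableOn ((Ici b).indicator (jointDensity μ t b)) (Ici 0)
    rw [integrableOn_indicator_iff measurableSet_Ici, Ici_inter_Ici, max_comm]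
    exact integrableOn_Ici_jointDensity ht b
  · rw [← integral_Ici_zero_indicator_jointDensity ht b]
    refine setIntegral_congr_fun measurableSet_Ici fun s hs ↦ (norm_of_nonneg ?_).symm
    rw [indicator_apply]
    split_ifs with hbs
    exacts [jointDensity_nonneg ht.le (by linarith [mem_Ici.1 hs, mem_Ici.1 hbs]), le_rfl]

end JointDensity

/-- the function `f(t, b, s)` integrates to one:
`∫_0^∞ ∫_{-∞}^s f(t, b, s) db ds = 1` for every `t > 0` and `μ ∈ ℝ`. -/
theorem jointDensity_integrates_to_one (μ t : ℝ) (ht : 0 < t) :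
    ∫ s in Ioi (0:ℝ), (∫ b in Iic s, jointDensity μ t b s) = 1 := by
  have hinner (s : ℝ) :
      ∫ b in Iic s, jointDensity μ t b s = ∫ b, (Ici b).indicator (jointDensity μ t b) s := by
    rw [← integral_indicator measurableSet_Iic]
    congr with b
  calc ∫ s in Ioi (0:ℝ), (∫ b in Iic s, jointDensity μ t b s)
      = ∫ s in Ici 0, ∫ b, (Ici b).indicator (jointDensity μ t b) s := by
        simp_rw [hinner, integral_Ici_eq_integral_Ioi]
    _ = ∫ b, ∫ s in Ici 0, (Ici b).indicator (jointDensity μ t b) s :=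
        integral_integral_swap (integrable_indicator_jointDensity ht)
    _ = ∫ b, gaussianPDFReal (μ * t) t.toNNReal b := by
        simp_rw [integral_Ici_zero_indicator_jointDensity ht]
    _ = 1 := integral_gaussianPDFReal_eq_one _ (toNNReal_pos.2 ht).ne'
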